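/- Let G be a finite simple graph, let r' ≥ 0 and m ≥ 0 be integers, and let (ψ_S) be an r'-local predicate family on G. Suppose there is no set of m + 1 vertices of G, pairwise at distance greater than 2r' in G, at each of which ψ_{V(G)} fails. Let λ be a layering of G and let r, ℓ be integers with r ≥ r' and ℓ > 2r(3m + 1). Then for all but at most 6rm of the ℓ − 2r distinct (ℓ, r)-covers R of the integers, there exists an m-plan p for R such that for every I ∈ R there is no set of p(I) + 1 vertices of λ⁻¹(M_r(I)), pairwise at distance greater than 2r' in G[λ⁻¹(I)], at each of which ψ_{λ⁻¹(I)} fails. -/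

import Mathlib

/-- A layering of a simple graph: adjacent vertices differ by at most 1. -/
def IsLayering {V : Type*} (G : SimpleGraph V) (lam : V → ℤ) : Prop :=
  ∀ ⦃u v : V⦄, G.Adj u v → |lam u - lam v| ≤ 1

/-- The spanning subgraph of `G` keeping only the edges with both ends in `U`.
Reachability and distances between vertices of `U` in this graph coincide with those
in the induced subgraph `G[U]`. -/
def restrictSet {V : Type*} (G : SimpleGraph V) (U : Set V) : SimpleGraph V where
  Adj u v := G.Adj u v ∧ u ∈ U ∧ v ∈ U
  symm := ⟨fun _ _ ⟨h, hu, hv⟩ => ⟨h.symm, hv, hu⟩⟩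
  loopless := ⟨fun u ⟨h, _, _⟩ => G.irrefl h⟩

/-- The interval of `l` consecutive integers with left endpoint `i`. -/
def Iv (l : ℕ) (i : ℤ) : Set ℤ := Set.Icc i (i + l - 1)

/-- The middle part `M_d(I)` of the interval of length `l` with left endpoint `i`. -/
def Md (l d : ℕ) (i : ℤ) : Set ℤ := Set.Icc (i + d) (i + l - d - 1)

/-- `i` is a left endpoint of an interval of the `(l, r)`-cover with residue `n`,
i.e. `i ≡ n (mod l − 2r)`. -/
def inCover (l r : ℕ) (n i : ℤ) : Prop := ((l : ℤ) - 2 * r) ∣ (i - n)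

/-- An `m`-plan for the `(l, r)`-cover with residue `n`: a finitely supported function
on intervals (identified with their left endpoints) with values summing to `m`,
supported on the intervals of the cover. -/
def IsPlan (l r : ℕ) (n : ℤ) (m : ℕ) (p : ℤ → ℕ) : Prop :=
  {i | p i ≠ 0}.Finite ∧ (∀ i, p i ≠ 0 → inCover l r n i) ∧ ∑ᶠ i, p i = m

/-- All vertices of `W` are pairwise at distance greater than `2r'` in `G` (vertices in
different components being at infinite distance). -/
def PairwiseFar {V : Type*} (G : SimpleGraph V) (r' : ℕ) (W : Finset V) : Prop :=
  ∀ w ∈ W, ∀ w' ∈ W, w ≠ w' → (G.Reachable w w' → 2 * r' < G.dist w w')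

/-- An `r'`-local predicate family on `G`: a family of predicates `ψ S` (for `S ⊆ V`)
such that whenever `S` contains the ball of radius `r'` around `v`, `ψ S v ↔ ψ univ v`. -/
def IsLocalFamily {V : Type*} (G : SimpleGraph V) (r' : ℕ) (ψ : Set V → V → Prop) : Prop :=
  ∀ (v : V) (S : Set V), {u | G.Reachable v u ∧ G.dist v u ≤ r'} ⊆ S → (ψ S v ↔ ψ Set.univ v)

/-!
Fix a maximum set `W₀` of vertices pairwise at distance `> 2r'` at which `ψ_V` fails; it has
`k ≤ m` elements. For a residue `n`, the middle parts `M_r(I)` of the intervals of the cover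
tile `ℤ`, so every level `λ(v)` lies in exactly one of them. Each level is within `2r` of the
boundary of its middle part for only `4r` residues, so for all but `4rk ≤ 6rm` residues every
`v ∈ W₀` lies `2r`-deep inside the middle part of its interval. For such a residue, give each interval as many
units of the plan as it has vertices of `W₀`, and put the remaining `m - k` units anywhere.

If some interval `I` carried `p(I) + 1` far failing vertices in `λ⁻¹(M_r(I))`, then: their
`r'`-balls lie in `λ⁻¹(I)`, so by locality they fail `ψ_V` and are far apart in `G` as well; and
they are far from every vertex of `W₀` assigned to another interval, since a vertex within
`2r' ≤ 2r` of such a deep vertex has its level in that interval's middle part, which is disjoint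
from `M_r(I)`. Replacing the vertices of `W₀` assigned to `I` by them would give a larger far
failing set, contradicting the maximality of `W₀`.
-/

open Finset

section Layering

variable {V : Type*} {G : SimpleGraph V} {lam : V → ℤ}

lemma IsLayering.abs_sub_le_length (hlam : IsLayering G lam) {u v : V} (q : G.Walk u v) :
    |lam u - lam v| ≤ q.length := by
  induction q with
  | nil => simp
  | @cons a b c hab q ih =>
    have := abs_sub_le (lam a) (lam b) (lam c)
    have := hlam hab
    rw [SimpleGraph.Walk.length_cons]
    push_cast
    linarith

lemma IsLayering.abs_sub_le_dist (hlam : IsLayering G lam) {u v : V} (h : G.Reachable u v) :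
    |lam u - lam v| ≤ G.dist u v := by
  obtain ⟨q, hq⟩ := h.exists_walk_length_eq_dist
  simpa [hq] using hlam.abs_sub_le_length q

end Layering

section Balls

variable {V : Type*} {G : SimpleGraph V}

lemma SimpleGraph.Walk.mem_ball_of_mem_support [DecidableEq V] {u v x : V} (q : G.Walk u v)
    (hx : x ∈ q.support) {d : ℕ} (hq : q.length ≤ 2 * d) :
    (G.Reachable u x ∧ G.dist u x ≤ d) ∨ (G.Reachable v x ∧ G.dist v x ≤ d) := by
  have hlen : (q.takeUntil x hx).length + (q.dropUntil x hx).length = q.length := by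
    rw [← SimpleGraph.Walk.length_append, q.take_spec hx]
  have h₁ := SimpleGraph.dist_le (q.takeUntil x hx)
  have h₂ := SimpleGraph.dist_le (q.dropUntil x hx).reverse
  rw [SimpleGraph.Walk.length_reverse] at h₂
  by_cases h : (q.takeUntil x hx).length ≤ d
  · exact .inl ⟨⟨q.takeUntil x hx⟩, by omega⟩
  · exact .inr ⟨⟨(q.dropUntil x hx).reverse⟩, by omega⟩

/-- A shortest walk of length `≤ 2r'` between two vertices of `W` stays in their `r'`-balls,
hence in `U`. -/
lemma pairwiseFar_of_restrictSet {U : Set V} {r' : ℕ} {W : Finset V}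
    (hball : ∀ w ∈ W, {u | G.Reachable w u ∧ G.dist w u ≤ r'} ⊆ U)
    (hW : PairwiseFar (restrictSet G U) r' W) : PairwiseFar G r' W := by
  classical
  intro w hw w' hw' hne hreach
  by_contra! hle
  obtain ⟨q, hq⟩ := hreach.exists_walk_length_eq_dist
  have hsupp : ∀ x ∈ q.support, x ∈ U := fun x hx =>
    (q.mem_ball_of_mem_support hx (d := r') (by omega)).elim (fun h => hball w hw h)
      fun h => hball w' hw' h
  let q' : (restrictSet G U).Walk w w' := q.transfer _ <| by
    rintro ⟨a, b⟩ he
    exact ⟨q.adj_of_mem_edges he, hsupp a (q.fst_mem_support_of_mem_edges he),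
      hsupp b (q.snd_mem_support_of_mem_edges he)⟩
  have hlen : q'.length = q.length := q.length_transfer _
  have := SimpleGraph.dist_le q'
  have := hW w hw w' hw' hne ⟨q'⟩
  omega

lemma PairwiseFar.mono {r' : ℕ} {W W' : Finset V} (hW : PairwiseFar G r' W) (h : W' ⊆ W) :
    PairwiseFar G r' W' :=
  fun w hw w' hw' => hW w (h hw) w' (h hw')

lemma PairwiseFar.union [DecidableEq V] {r' : ℕ} {A B : Finset V} (hA : PairwiseFar G r' A)
    (hB : PairwiseFar G r' B) (hAB : ∀ a ∈ A, ∀ b ∈ B, G.Reachable a b → 2 * r' < G.dist a b) :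
    PairwiseFar G r' (A ∪ B) := by
  intro a ha b hb hne hreach
  rcases mem_union.1 ha with ha | ha <;> rcases mem_union.1 hb with hb | hb
  · exact hA a ha b hb hne hreach
  · exact hAB a ha b hb hreach
  · rw [SimpleGraph.dist_comm]
    exact hAB b hb a ha hreach.symm
  · exact hB a ha b hb hne hreach

lemma disjoint_of_far {r' : ℕ} {A B : Finset V}
    (hAB : ∀ a ∈ A, ∀ b ∈ B, G.Reachable a b → 2 * r' < G.dist a b) : Disjoint A B :=
  disjoint_left.2 fun a ha hb => by
    simpa using hAB a ha a hb (SimpleGraph.Reachable.refl a)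

end Balls

section Covers

variable {l r d : ℕ} {n i x y : ℤ}

lemma mem_Md_of_abs_sub_le {d' e : ℕ} (hx : x ∈ Md l d' i) (hy : |y - x| ≤ e) (h : d + e ≤ d') :
    y ∈ Md l d i := by
  simp only [Md, Set.mem_Icc, abs_le] at *
  omega

lemma mem_Iv_of_abs_sub_le (hx : x ∈ Md l d i) (hy : |y - x| ≤ d) : y ∈ Iv l i := by
  simp only [Md, Iv, Set.mem_Icc, abs_le] at *
  omega

lemma eq_of_mem_Md_of_mem_Md {j : ℤ} (hi : inCover l r n i) (hj : inCover l r n j)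
    (hxi : x ∈ Md l r i) (hxj : x ∈ Md l r j) : i = j := by
  simp only [Md, Set.mem_Icc] at hxi hxj
  have hdvd : ((l : ℤ) - 2 * r) ∣ i - j := by
    simpa using dvd_sub hi hj
  have := Int.eq_zero_of_abs_lt_dvd hdvd (by rw [abs_lt]; omega)
  omega

/-- The left endpoint of the interval of the cover with residue `n` whose middle part `M_r`
contains `x`. -/
def coverIndex (l r : ℕ) (n x : ℤ) : ℤ := x - r - (x - r - n) % ((l : ℤ) - 2 * r)

lemma inCover_coverIndex : inCover l r n (coverIndex l r n x) :=
  ⟨(x - r - n) / ((l : ℤ) - 2 * r), by rw [coverIndex, Int.emod_def]; ring⟩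

open Classical in
/-- The residues `n` for which `x` is within `2r` of the boundary of its middle part `M_r`. -/
noncomputable def badResidues (l r : ℕ) (x : ℤ) : Finset ℕ :=
  (range (l - 2 * r)).filter fun n => x ∉ Md l (3 * r) (coverIndex l r n x)

lemma card_badResidues_le : (badResidues l r x).card ≤ 4 * r := by
  set L : ℤ := (l : ℤ) - 2 * r with hL
  have hinj : Set.InjOn (fun n : ℕ => (x - r - n) % L) (badResidues l r x) := by
    intro n₁ h₁ n₂ h₂ heq
    simp only [badResidues, mem_coe, mem_filter, mem_range] at h₁ h₂
    have hdvd : L ∣ (n₁ : ℤ) - n₂ := by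
      simpa using (Int.ModEq.dvd (heq : (x - r - n₁) ≡ (x - r - n₂) [ZMOD L]))
    have := Int.eq_zero_of_abs_lt_dvd hdvd (by rw [abs_lt]; omega)
    omega
  have hmaps : Set.MapsTo (fun n : ℕ => (x - r - n) % L) (badResidues l r x)
      (Ico 0 (2 * r) ∪ Ico (L - 2 * r) L : Finset ℤ) := by
    intro n hn
    simp only [badResidues, mem_coe, mem_filter, mem_range, Md, coverIndex,
      Set.mem_Icc] at hn
    rw [← hL] at hn
    have hLpos : 0 < L := by omega
    have := Int.emod_nonneg (x - r - n) hLpos.ne'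
    have := Int.emod_lt_of_pos (x - r - n) hLpos
    simp only [coe_union, coe_Ico, Set.mem_union, Set.mem_Ico]
    omega
  calc (badResidues l r x).card ≤ (Ico 0 (2 * r) ∪ Ico (L - 2 * r) L : Finset ℤ).card :=
        card_le_card_of_injOn _ hmaps hinj
    _ ≤ 4 * r := by
        refine (card_union_le _ _).trans ?_
        rw [Int.card_Ico, Int.card_Ico]
        omega

end Covers

section Plans

variable {V : Type*}

def fiberPlan (W₀ : Finset V) (f : V → ℤ) (n : ℤ) (m : ℕ) (i : ℤ) : ℕ :=
  (W₀.filter (f · = i)).card + if i = n then m - W₀.card else 0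

lemma isPlan_fiberPlan {l r m : ℕ} {n : ℤ} {W₀ : Finset V} {f : V → ℤ} (hm : W₀.card ≤ m)
    (hf : ∀ v ∈ W₀, inCover l r n (f v)) : IsPlan l r n m (fiberPlan W₀ f n m) := by
  classical
  have hsupp : ∀ i, fiberPlan W₀ f n m i ≠ 0 → i = n ∨ ∃ v ∈ W₀, f v = i := by
    intro i hi
    by_cases hin : i = n
    · exact .inl hin
    · simp only [fiberPlan, hin, if_false, add_zero, ne_eq, card_eq_zero,
        ← nonempty_iff_ne_empty] at hi
      obtain ⟨v, hv⟩ := hi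
      exact .inr ⟨v, (mem_filter.1 hv).1, (mem_filter.1 hv).2⟩
  have hsub : Function.support (fiberPlan W₀ f n m) ⊆ ↑(insert n (W₀.image f)) := by
    intro i hi
    rcases hsupp i hi with rfl | ⟨v, hv, rfl⟩
    · exact mem_insert_self _ _
    · exact mem_insert_of_mem (mem_image_of_mem f hv)
  refine ⟨(insert n (W₀.image f)).finite_toSet.subset hsub, fun i hi => ?_, ?_⟩
  · rcases hsupp i hi with rfl | ⟨v, hv, rfl⟩
    · exact ⟨0, by ring⟩
    · exact hf v hv
  · rw [finsum_eq_sum_of_support_subset _ hsub]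
    simp only [fiberPlan, sum_add_distrib, sum_ite_eq', mem_insert_self, if_true]
    rw [← card_eq_sum_card_fiberwise fun v hv => mem_insert_of_mem (mem_image_of_mem f hv)]
    omega

end Plans

lemma Finset.exists_max_card_of_le {α : Type*} {P : Finset α → Prop} {m : ℕ} (h₀ : P ∅)
    (hle : ∀ s, P s → s.card ≤ m) : ∃ s, P s ∧ ∀ t, P t → t.card ≤ s.card := by
  classical
  obtain ⟨s, hs, hcard⟩ := Nat.findGreatest_spec (P := fun k => ∃ s, P s ∧ s.card = k)
    (Nat.zero_le m) ⟨∅, h₀, rfl⟩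
  exact ⟨s, hs, fun t ht => hcard ▸ Nat.le_findGreatest (hle t ht) ⟨t, ht, rfl⟩⟩

section Main

variable {V : Type*} {G : SimpleGraph V} {r' : ℕ} {ψ : Set V → V → Prop} {lam : V → ℤ}
  {r l : ℕ}

def IsFarFailing (G : SimpleGraph V) (r' : ℕ) (ψ : Set V → V → Prop) (W : Finset V) : Prop :=
  PairwiseFar G r' W ∧ ∀ w ∈ W, ¬ ψ Set.univ w

lemma IsFarFailing.empty : IsFarFailing G r' ψ ∅ :=
  ⟨by simp [PairwiseFar], by simp⟩

lemma IsFarFailing.card_le {m : ℕ} {W : Finset V}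
    (hno : ¬ ∃ W : Finset V, W.card = m + 1 ∧ PairwiseFar G r' W ∧ ∀ w ∈ W, ¬ ψ Set.univ w)
    (hW : IsFarFailing G r' ψ W) : W.card ≤ m := by
  by_contra! h
  obtain ⟨W', hsub, hcard⟩ := exists_subset_card_eq (show m + 1 ≤ W.card by omega)
  exact hno ⟨W', hcard, hW.1.mono hsub, fun w hw => hW.2 w (hsub hw)⟩

lemma IsLayering.ball_subset_preimage_Iv (hlam : IsLayering G lam) (hr : r' ≤ r) {i : ℤ} {w : V}
    (hw : lam w ∈ Md l r i) : {u | G.Reachable w u ∧ G.dist w u ≤ r'} ⊆ lam ⁻¹' Iv l i := by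
  rintro u ⟨hreach, hdist⟩
  refine mem_Iv_of_abs_sub_le hw ?_
  rw [abs_sub_comm]
  exact (hlam.abs_sub_le_dist hreach).trans (by exact_mod_cast hdist.trans hr)

lemma isFarFailing_of_mem_Md (hψ : IsLocalFamily G r' ψ) (hlam : IsLayering G lam) (hr : r' ≤ r)
    {i : ℤ} {W : Finset V} (hWmid : ∀ w ∈ W, lam w ∈ Md l r i)
    (hWfar : PairwiseFar (restrictSet G (lam ⁻¹' Iv l i)) r' W)
    (hWfail : ∀ w ∈ W, ¬ ψ (lam ⁻¹' Iv l i) w) : IsFarFailing G r' ψ W :=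
  have hball w hw := hlam.ball_subset_preimage_Iv hr (hWmid w hw)
  ⟨pairwiseFar_of_restrictSet hball hWfar,
    fun w hw => (hψ w _ (hball w hw)).not.1 (hWfail w hw)⟩

lemma far_of_coverIndex_ne (hlam : IsLayering G lam) (hr : r' ≤ r) {n i : ℤ} {v w : V}
    (hv : lam v ∈ Md l (3 * r) (coverIndex l r n (lam v))) (hi : inCover l r n i)
    (hne : coverIndex l r n (lam v) ≠ i) (hw : lam w ∈ Md l r i) (hreach : G.Reachable v w) :
    2 * r' < G.dist v w := by
  by_contra! hle
  have hdist : |lam w - lam v| ≤ (2 * r : ℕ) := by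
    rw [abs_sub_comm]
    exact (hlam.abs_sub_le_dist hreach).trans (by exact_mod_cast hle.trans (by omega))
  exact hne <| eq_of_mem_Md_of_mem_Md inCover_coverIndex hi
    (mem_Md_of_abs_sub_le hv hdist (by omega)) hw

lemma card_le_card_filter_coverIndex_eq (hψ : IsLocalFamily G r' ψ) (hlam : IsLayering G lam)
    (hr : r' ≤ r) {n i : ℤ} {W₀ : Finset V} (hW₀ : IsFarFailing G r' ψ W₀)
    (hmax : ∀ W, IsFarFailing G r' ψ W → W.card ≤ W₀.card)
    (hdeep : ∀ v ∈ W₀, lam v ∈ Md l (3 * r) (coverIndex l r n (lam v))) (hi : inCover l r n i)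
    {W : Finset V} (hWmid : ∀ w ∈ W, lam w ∈ Md l r i)
    (hWfar : PairwiseFar (restrictSet G (lam ⁻¹' Iv l i)) r' W)
    (hWfail : ∀ w ∈ W, ¬ ψ (lam ⁻¹' Iv l i) w) :
    W.card ≤ (W₀.filter fun v => coverIndex l r n (lam v) = i).card := by
  classical
  set F := W₀.filter fun v => ¬ coverIndex l r n (lam v) = i
  have hW := isFarFailing_of_mem_Md hψ hlam hr hWmid hWfar hWfail
  have hFW : ∀ v ∈ F, ∀ w ∈ W, G.Reachable v w → 2 * r' < G.dist v w := fun v hv w hw =>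
    far_of_coverIndex_ne hlam hr (hdeep v (mem_filter.1 hv).1) hi (mem_filter.1 hv).2 (hWmid w hw)
  have hunion : IsFarFailing G r' ψ (F ∪ W) :=
    ⟨(hW₀.1.mono (filter_subset _ _)).union hW.1 hFW, fun v hv =>
      (mem_union.1 hv).elim (fun hv => hW₀.2 v (mem_filter.1 hv).1) (hW.2 v)⟩
  have := hmax _ hunion
  rw [card_union_of_disjoint (disjoint_of_far hFW)] at this
  have : (W₀.filter fun v => coverIndex l r n (lam v) = i).card + F.card = W₀.card :=
    card_filter_add_card_filter_not _
  omega

end Main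

theorem stmt_14_general {V : Type*} (G : SimpleGraph V)
    (r' m : ℕ) (ψ : Set V → V → Prop) (hψ : IsLocalFamily G r' ψ)
    (hno : ¬ ∃ W : Finset V, W.card = m + 1 ∧ PairwiseFar G r' W ∧
        ∀ w ∈ W, ¬ ψ Set.univ w)
    (lam : V → ℤ) (hlam : IsLayering G lam)
    (r l : ℕ) (hr : r' ≤ r) :
    ∃ Bad : Finset ℕ, Bad ⊆ Finset.range (l - 2 * r) ∧ Bad.card ≤ 6 * r * m ∧
      ∀ n ∈ Finset.range (l - 2 * r), n ∉ Bad →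
        ∃ p : ℤ → ℕ, IsPlan l r n m p ∧
          ∀ i : ℤ, inCover l r n i →
            ¬ ∃ W : Finset V, W.card = p i + 1 ∧ (∀ w ∈ W, lam w ∈ Md l r i) ∧
                PairwiseFar (restrictSet G (lam ⁻¹' Iv l i)) r' W ∧
                ∀ w ∈ W, ¬ ψ (lam ⁻¹' Iv l i) w := by
  classical
  have hbound : ∀ W, IsFarFailing G r' ψ W → W.card ≤ m := fun W hW => hW.card_le hno
  obtain ⟨W₀, hW₀, hmax⟩ := exists_max_card_of_le IsFarFailing.empty hbound
  refine ⟨W₀.biUnion fun v => badResidues l r (lam v),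
    biUnion_subset.2 fun _ _ => filter_subset _ _, ?_, ?_⟩
  · calc _ ≤ W₀.card * (4 * r) :=
          card_biUnion_le_card_mul _ _ _ fun _ _ => card_badResidues_le
      _ ≤ 6 * r * m := by nlinarith [hbound W₀ hW₀]
  · intro n hn hnBad
    have hdeep : ∀ v ∈ W₀, lam v ∈ Md l (3 * r) (coverIndex l r n (lam v)) := fun v hv => by
      by_contra h
      exact hnBad (mem_biUnion.2 ⟨v, hv, mem_filter.2 ⟨hn, h⟩⟩)
    refine ⟨fiberPlan W₀ (fun v => coverIndex l r n (lam v)) n m,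
      isPlan_fiberPlan (hbound W₀ hW₀) fun _ _ => inCover_coverIndex, ?_⟩
    rintro i hi ⟨W, hWcard, hWmid, hWfar, hWfail⟩
    have := card_le_card_filter_coverIndex_eq hψ hlam hr hW₀ hmax hdeep hi hWmid hWfar hWfail
    simp only [fiberPlan] at hWcard
    omega

/-- If `G` contains no `m + 1` vertices pairwise at distance greater than `2r'` at each
of which `ψ_{V(G)}` fails, then for all but at most `6rm` of the `l − 2r` distinct
`(l, r)`-covers `R` (indexed by residues `n ∈ {0, …, l − 2r − 1}`) there is an `m`-plan
`p` for `R` such that for every interval `I ∈ R` there is no set of `p(I) + 1` vertices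
of `λ⁻¹(M_r(I))`, pairwise far apart in `G[λ⁻¹(I)]`, at each of which `ψ_{λ⁻¹(I)}`
fails. -/
theorem stmt_14 {V : Type*} [Fintype V] (G : SimpleGraph V)
    (r' m : ℕ) (ψ : Set V → V → Prop) (hψ : IsLocalFamily G r' ψ)
    (hno : ¬ ∃ W : Finset V, W.card = m + 1 ∧ PairwiseFar G r' W ∧
        ∀ w ∈ W, ¬ ψ Set.univ w)
    (lam : V → ℤ) (hlam : IsLayering G lam)
    (r l : ℕ) (hr : r' ≤ r) (hl : 2 * r * (3 * m + 1) < l) :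
    ∃ Bad : Finset ℕ, Bad ⊆ Finset.range (l - 2 * r) ∧ Bad.card ≤ 6 * r * m ∧
      ∀ n ∈ Finset.range (l - 2 * r), n ∉ Bad →
        ∃ p : ℤ → ℕ, IsPlan l r n m p ∧
          ∀ i : ℤ, inCover l r n i →
            ¬ ∃ W : Finset V, W.card = p i + 1 ∧ (∀ w ∈ W, lam w ∈ Md l r i) ∧
                PairwiseFar (restrictSet G (lam ⁻¹' Iv l i)) r' W ∧
                ∀ w ∈ W, ¬ ψ (lam ⁻¹' Iv l i) w :=
  stmt_14_general G r' m ψ hψ hno lam hlam r l hr
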